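/- Let (a,b) and (a',b) be two different lists of pairs such that a' yields a by a unit (i,j)-transfer. Then the number N_2(a,b) of digraph realizations (n×n 0-1 matrices with zero diagonal, row sums b, column sums a) is at least N_2(a',b). -/

import Mathlib

open Finset

/-- Partial sum of the first `k` entries of `a`. -/
def partSum {n : ℕ} (a : Fin n → ℕ) (k : ℕ) : ℕ :=
  ∑ i : Fin n, if (i : ℕ) < k then a i else 0

/-- `a ≺ a'` : `a` is majorized by `a'`. -/
def Majorized {n : ℕ} (a a' : Fin n → ℕ) : Prop :=
  (∀ k : ℕ, partSum a k ≤ partSum a' k) ∧ ∑ i, a i = ∑ i, a' i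

/-- `a` is nonincreasing. -/
def Nonincreasing {n : ℕ} (a : Fin n → ℕ) : Prop :=
  ∀ i j : Fin n, i ≤ j → a j ≤ a i

/-- `b` is nondecreasing. -/
def Nondecreasing {n : ℕ} (b : Fin n → ℕ) : Prop :=
  ∀ i j : Fin n, i ≤ j → b i ≤ b j

/-- `a` is obtained from `a'` by a unit `(i,j)`-transfer. -/
def UnitTransfer {n : ℕ} (a' a : Fin n → ℕ) (i j : Fin n) : Prop :=
  i < j ∧ a' j + 2 ≤ a' i ∧
  a = Function.update (Function.update a' i (a' i - 1)) j (a' j + 1)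

/-- Row sum of a 0-1 matrix. -/
def rowSum {n : ℕ} (M : Fin n → Fin n → Bool) (i : Fin n) : ℕ :=
  ∑ j, if M i j then 1 else 0

/-- Column sum of a 0-1 matrix. -/
def colSum {n : ℕ} (M : Fin n → Fin n → Bool) (j : Fin n) : ℕ :=
  ∑ i, if M i j then 1 else 0

/-- Number of loop-digraph realizations of `(a,b)`:
`n×n` 0-1 matrices with row sums `b` and column sums `a`. -/
noncomputable def N1 {n : ℕ} (a b : Fin n → ℕ) : ℕ :=
  Nat.card {M : Fin n → Fin n → Bool //
    (∀ i, rowSum M i = b i) ∧ (∀ j, colSum M j = a j)}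

def LoopDigraphic {n : ℕ} (a b : Fin n → ℕ) : Prop := 0 < N1 a b

/-- Number of digraph realizations of `(a,b)`:
`n×n` 0-1 matrices with zero diagonal, row sums `b` and column sums `a`. -/
noncomputable def N2 {n : ℕ} (a b : Fin n → ℕ) : ℕ :=
  Nat.card {M : Fin n → Fin n → Bool //
    (∀ i, M i i = false) ∧ (∀ i, rowSum M i = b i) ∧ (∀ j, colSum M j = a j)}

def Digraphic {n : ℕ} (a b : Fin n → ℕ) : Prop := 0 < N2 a b

/-- Number of simple graph realizations of `a` (symmetric 0-1 adjacency matrices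
with zero diagonal and degrees `a`). -/
noncomputable def N3 {n : ℕ} (a : Fin n → ℕ) : ℕ :=
  Nat.card {M : Fin n → Fin n → Bool //
    (∀ i j, M i j = M j i) ∧ (∀ i, M i i = false) ∧ (∀ i, rowSum M i = a i)}

def Graphic {n : ℕ} (a : Fin n → ℕ) : Prop := 0 < N3 a

/-- The minconvex list for parameters `n, m`. -/
def minconvex (n m : ℕ) : Fin n → ℕ :=
  fun i => if (i : ℕ) < m % n then m / n + 1 else m / n

/-- `(a,b)` is lexicographically nonincreasing. -/
def LexNonincreasing {n : ℕ} (a b : Fin n → ℕ) : Prop :=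
  ∀ i j : Fin n, i ≤ j → (a j < a i ∨ (a i = a j ∧ b j ≤ b i))

/-!
Call a row `r ∉ {i, j}` of a 0-1 matrix movable if it reads `1` in column `i` and `0` in
column `j`. Swapping these two entries turns a realization of `(a', b)` into one of `(a, b)`;
the swap is an involution, so a realization of `(a, b)` is hit at most as often as it has rows
with the opposite pattern. Since the diagonal is zero and `a'_i ≥ a'_j + 2`, a realization of
`(a', b)` has more movable rows than opposite rows, and one swap adds exactly one opposite row.
Hence across every edge of this bipartite swap graph the degree on the `(a, b)` side is at most
the degree on the `(a', b)` side, and weighted double counting gives `N₂(a', b) ≤ N₂(a, b)`.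
-/

namespace Finset

variable {α β : Type*} {s : Finset α} {t : Finset β}

/-- Weighted double counting: spread the unit mass of each `a ∈ s` evenly over its neighbours;
then every `b ∈ t` receives at most `1`. -/
theorem card_le_card_of_card_bipartiteBelow_le_card_bipartiteAbove (r : α → β → Prop)
    [∀ a b, Decidable (r a b)] (hpos : ∀ a ∈ s, 0 < #(t.bipartiteAbove r a))
    (hdeg : ∀ a ∈ s, ∀ b ∈ t, r a b → #(s.bipartiteBelow r b) ≤ #(t.bipartiteAbove r a)) :
    #s ≤ #t := by
  have hmass : ∀ m : ℕ, 0 < m → m • (m : ℚ)⁻¹ = 1 := fun m hm => by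
    rw [nsmul_eq_mul, mul_inv_cancel₀ (by exact_mod_cast hm.ne')]
  have key : (#s : ℚ) ≤ #t := calc
    (#s : ℚ) = ∑ a ∈ s, ∑ _ ∈ t.bipartiteAbove r a, (#(t.bipartiteAbove r a) : ℚ)⁻¹ := by
      rw [card_eq_sum_ones, Nat.cast_sum]
      exact sum_congr rfl fun a ha => by rw [sum_const, hmass _ (hpos a ha), Nat.cast_one]
    _ ≤ ∑ a ∈ s, ∑ b ∈ t.bipartiteAbove r a, (#(s.bipartiteBelow r b) : ℚ)⁻¹ := by
      refine sum_le_sum fun a ha => sum_le_sum fun b hb => ?_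
      rw [mem_bipartiteAbove r] at hb
      have hab : a ∈ s.bipartiteBelow r b := (mem_bipartiteBelow r).2 ⟨ha, hb.2⟩
      gcongr
      · exact_mod_cast card_pos.2 ⟨a, hab⟩
      · exact_mod_cast hdeg a ha b hb.1 hb.2
    _ = ∑ b ∈ t, ∑ _ ∈ s.bipartiteBelow r b, (#(s.bipartiteBelow r b) : ℚ)⁻¹ :=
      sum_comm' fun a b => by simp only [mem_bipartiteAbove r, mem_bipartiteBelow r]; tauto
    _ ≤ ∑ _ ∈ t, (1 : ℚ) := by
      refine sum_le_sum fun b _ => ?_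
      rcases (s.bipartiteBelow r b).eq_empty_or_nonempty with h | h
      · simp [h]
      · rw [sum_const, hmass _ (card_pos.2 h)]
    _ = #t := by simp
  exact_mod_cast key

end Finset

section RowSwap

variable {n : ℕ} (i j : Fin n)

def movableRows (M : Fin n → Fin n → Bool) : Finset (Fin n) :=
  {r | r ≠ i ∧ r ≠ j ∧ M r i = true ∧ M r j = false}

def swapRow (M : Fin n → Fin n → Bool) (k : Fin n) : Fin n → Fin n → Bool :=
  Function.update M k (M k ∘ Equiv.swap i j)

variable {i j}

theorem colSum_eq_card (M : Fin n → Fin n → Bool) (c : Fin n) :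
    colSum M c = #{r | M r c = true} := by
  simp [colSum, sum_boole]

theorem card_movableRows_lt {M : Fin n → Fin n → Bool} (hi : M i i = false) (hj : M j j = false)
    (hcol : colSum M j + 2 ≤ colSum M i) : #(movableRows j i M) < #(movableRows i j M) := by
  rw [colSum_eq_card, colSum_eq_card] at hcol
  set A : Finset (Fin n) := {r | M r i = true}
  set B : Finset (Fin n) := {r | M r j = true}
  have hA : A \ B ⊆ insert j (movableRows i j M) := by
    intro r
    by_cases hr : r = j <;> by_cases hr' : r = i <;> simp_all [A, B, movableRows]
  have hB : movableRows j i M ⊆ B \ A := by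
    intro r
    simp +contextual [A, B, movableRows]
  have := card_le_card hA
  have := card_le_card hB
  have := card_insert_le j (movableRows i j M)
  have := card_sdiff_add_card_inter A B
  have := card_sdiff_add_card_inter B A
  rw [inter_comm B A] at this
  omega

theorem swapRow_apply_of_ne (M : Fin n → Fin n → Bool) {k r : Fin n} (hr : r ≠ k) (c : Fin n) :
    swapRow i j M k r c = M r c := by
  simp [swapRow, hr]

theorem swapRow_apply_self (M : Fin n → Fin n → Bool) (k c : Fin n) :
    swapRow i j M k k c = M k (Equiv.swap i j c) := by
  simp [swapRow]

theorem swapRow_swapRow (M : Fin n → Fin n → Bool) (k : Fin n) :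
    swapRow i j (swapRow i j M k) k = M := by
  simp [swapRow, Function.comp_def]

theorem rowSum_swapRow (M : Fin n → Fin n → Bool) (k : Fin n) :
    rowSum (swapRow i j M k) = rowSum M := by
  funext r
  rcases eq_or_ne r k with rfl | hr
  · simp only [rowSum, swapRow_apply_self]
    exact Equiv.sum_comp (Equiv.swap i j) fun c => if M r c then 1 else 0
  · simp only [rowSum, swapRow_apply_of_ne M hr]

theorem colSum_update_add (M : Fin n → Fin n → Bool) (k : Fin n) (w : Fin n → Bool) (c : Fin n) :
    colSum (Function.update M k w) c + (if M k c then 1 else 0)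
      = colSum M c + (if w c then 1 else 0) := by
  simp only [colSum, ← add_sum_erase _ _ (mem_univ k), Function.update_self]
  rw [sum_congr rfl fun r hr => by rw [Function.update_of_ne (ne_of_mem_erase hr)]]
  ring

theorem colSum_swapRow {M : Fin n → Fin n → Bool} {k : Fin n} (hk : k ∈ movableRows i j M) :
    colSum (swapRow i j M k) = Function.update (Function.update (colSum M) i (colSum M i - 1)) j
      (colSum M j + 1) := by
  simp only [movableRows, mem_filter, mem_univ, true_and] at hk
  obtain ⟨-, -, hki, hkj⟩ := hk
  have hij : i ≠ j := fun h => by rw [h] at hki; simp [hki] at hkj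
  funext c
  have h : colSum (swapRow i j M k) c + (if M k c then 1 else 0)
      = colSum M c + (if M k (Equiv.swap i j c) then 1 else 0) := colSum_update_add M k _ c
  rcases eq_or_ne c j with rfl | hcj
  · simpa [hki, hkj] using h
  rcases eq_or_ne c i with rfl | hci
  · simp [hki, hkj, hij] at h ⊢
    omega
  · simpa [hci, hcj, Equiv.swap_apply_of_ne_of_ne] using h

theorem movableRows_swapRow {M : Fin n → Fin n → Bool} {k : Fin n} (hk : k ∈ movableRows i j M) :
    movableRows j i (swapRow i j M k) = insert k (movableRows j i M) := by
  simp only [movableRows, mem_filter, mem_univ, true_and] at hk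
  ext r
  rcases eq_or_ne r k with rfl | hr
  · simp_all [movableRows, swapRow_apply_self]
  · simp [movableRows, swapRow_apply_of_ne M hr, hr]

theorem swapRow_injOn (M : Fin n → Fin n → Bool) :
    Set.InjOn (swapRow i j M) (movableRows i j M) := by
  intro k hk l hl hkl
  by_contra hne
  have h := congrFun (congrFun hkl k) i
  rw [swapRow_apply_self, Equiv.swap_apply_left, swapRow_apply_of_ne M hne] at h
  simp_all [movableRows]

end RowSwap

section Realizations

variable {n : ℕ}

def realizations (a b : Fin n → ℕ) : Finset (Fin n → Fin n → Bool) :=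
  {M | (∀ k, M k k = false) ∧ rowSum M = b ∧ colSum M = a}

theorem mem_realizations {a b : Fin n → ℕ} {M : Fin n → Fin n → Bool} :
    M ∈ realizations a b ↔ (∀ k, M k k = false) ∧ rowSum M = b ∧ colSum M = a := by
  simp [realizations]

theorem N2_eq_card_realizations (a b : Fin n → ℕ) : N2 a b = #(realizations a b) := by
  simp [N2, realizations, funext_iff, Nat.card_eq_fintype_card, Fintype.card_subtype]

def IsRowMove (i j : Fin n) (M' M : Fin n → Fin n → Bool) : Prop :=
  ∃ k ∈ movableRows i j M', swapRow i j M' k = M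

instance (i j : Fin n) : DecidableRel (IsRowMove i j) := fun M' M =>
  inferInstanceAs (Decidable (∃ k ∈ movableRows i j M', swapRow i j M' k = M))

variable {i j : Fin n} {a b : Fin n → ℕ}

theorem swapRow_mem_realizations {M : Fin n → Fin n → Bool} {k : Fin n}
    (hM : M ∈ realizations a b) (hk : k ∈ movableRows i j M) :
    swapRow i j M k ∈
      realizations (Function.update (Function.update a i (a i - 1)) j (a j + 1)) b := by
  obtain ⟨hdiag, hrow, rfl⟩ := mem_realizations.1 hM
  refine mem_realizations.2 ⟨fun r => ?_, by rw [rowSum_swapRow, hrow], colSum_swapRow hk⟩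
  simp only [movableRows, mem_filter, mem_univ, true_and] at hk
  rcases eq_or_ne r k with rfl | hr
  · rw [swapRow_apply_self, Equiv.swap_apply_of_ne_of_ne hk.1 hk.2.1, hdiag]
  · rw [swapRow_apply_of_ne M hr, hdiag]

theorem card_movableRows_le_card_bipartiteAbove {M : Fin n → Fin n → Bool}
    (hM : M ∈ realizations a b) :
    #(movableRows i j M) ≤
      #(bipartiteAbove (IsRowMove i j)
        (realizations (Function.update (Function.update a i (a i - 1)) j (a j + 1)) b) M) := by
  rw [← card_image_of_injOn (swapRow_injOn M)]
  refine card_le_card fun M' hM' => ?_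
  obtain ⟨k, hk, rfl⟩ := mem_image.1 hM'
  exact (mem_bipartiteAbove _).2 ⟨swapRow_mem_realizations hM hk, k, hk, rfl⟩

theorem card_bipartiteBelow_le_card_movableRows (s : Finset (Fin n → Fin n → Bool))
    (M : Fin n → Fin n → Bool) : #(s.bipartiteBelow (IsRowMove i j) M) ≤ #(movableRows j i M) := by
  refine (card_le_card fun M' hM' => ?_).trans (card_image_le (f := swapRow i j M))
  obtain ⟨-, k, hk, rfl⟩ := (mem_bipartiteBelow _).1 hM'
  exact mem_image.2 ⟨k, movableRows_swapRow hk ▸ mem_insert_self k _, swapRow_swapRow M' k⟩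

end Realizations

theorem stmt14_general {n : ℕ} (a a' b : Fin n → ℕ) (i j : Fin n)
    (ht : UnitTransfer a' a i j) :
    N2 a' b ≤ N2 a b := by
  obtain ⟨-, hgap, rfl⟩ := ht
  rw [N2_eq_card_realizations, N2_eq_card_realizations]
  have hlt : ∀ M ∈ realizations a' b, #(movableRows j i M) < #(movableRows i j M) := by
    intro M hM
    obtain ⟨hdiag, -, rfl⟩ := mem_realizations.1 hM
    exact card_movableRows_lt (hdiag i) (hdiag j) hgap
  refine card_le_card_of_card_bipartiteBelow_le_card_bipartiteAbove (IsRowMove i j)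
    (fun M hM => (hlt M hM).pos.trans_le (card_movableRows_le_card_bipartiteAbove hM)) ?_
  rintro M hM - - ⟨k, hk, rfl⟩
  calc _ ≤ #(movableRows j i (swapRow i j M k)) := card_bipartiteBelow_le_card_movableRows _ _
    _ = #(movableRows j i M) + 1 := by
      rw [movableRows_swapRow hk, card_insert_of_notMem]
      simp_all [movableRows]
    _ ≤ #(movableRows i j M) := hlt M hM
    _ ≤ _ := card_movableRows_le_card_bipartiteAbove hM

theorem stmt14 {n : ℕ} (a a' b : Fin n → ℕ) (i j : Fin n)
    (hne : a ≠ a') (ht : UnitTransfer a' a i j) :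
    N2 a' b ≤ N2 a b :=
  stmt14_general a a' b i j ht
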